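/- arXiv:1409.3127 — 2 statements merged into one kernel-verified Lean document; each statement's English description precedes it below -/
import Mathlib

section
/- For integers 2 ≤ n ≤ N and every subset S of {1,…,N} with exactly n−1 elements, there exists exactly one absolutely incoming (n−1)-face of I^N whose asterisk positions are exactly S, and exactly one absolutely outgoing (n−1)-face whose asterisk positions are exactly S. -/
/-- A face of the `N`-dimensional cube `I^N`, encoded as a function assigning to each
coordinate position either a digit (`some false` = 0, `some true` = 1) or an
asterisk (`none`). -/
abbrev CubeFace (N : ℕ) := Fin N → Option Bool

/-- `τ` is a `k`-face: exactly `k` positions carry an asterisk. -/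
def IsFace {N : ℕ} (k : ℕ) (τ : CubeFace N) : Prop :=
  (Finset.filter (fun i => τ i = none) Finset.univ).card = k

/-- The digit `κ` associated to the asterisk position `p` of `f`: if `p` is the `k`-th
asterisk position of `f` (counting 1-based from the left), then `κ = 0` (i.e. `false`)
for odd `k` and `κ = 1` (i.e. `true`) for even `k`.  Equivalently, `κ` is `true` iff the
number of asterisk positions strictly before `p` is odd. -/
def kappa {N : ℕ} (f : CubeFace N) (p : Fin N) : Bool :=
  decide (Odd ((Finset.filter (fun q => q < p ∧ f q = none) Finset.univ).card))

/-- `g` is obtained from `f` by replacing the asterisk at position `p` by the digit `d`. -/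
def SubfaceAt {N : ℕ} (f g : CubeFace N) (p : Fin N) (d : Bool) : Prop :=
  f p = none ∧ g p = some d ∧ ∀ q, q ≠ p → g q = f q

/-- `g` is an incoming subface of `f`: it is obtained from `f` by replacing the asterisk
at some position `p` by the digit `κ(f, p)`. -/
def Incoming {N : ℕ} (f g : CubeFace N) : Prop := ∃ p, SubfaceAt f g p (kappa f p)

/-- `g` is an outgoing subface of `f`: it is obtained from `f` by replacing the asterisk
at some position `p` by the digit different from `κ(f, p)`. -/
def Outgoing {N : ℕ} (f g : CubeFace N) : Prop := ∃ p, SubfaceAt f g p (!kappa f p)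

/-- The order of a face `g`: the number of `n`-faces of the cube for which `g` is an
incoming subface. -/
noncomputable def faceOrder {N : ℕ} (n : ℕ) (g : CubeFace N) : ℕ :=
  Nat.card {f : CubeFace N // IsFace n f ∧ Incoming f g}

/-!
The digit `κ_f(p)` that an `n`-face `f` assigns to its asterisk at `p` depends only on the
asterisks of `f` before `p`. So if `g` is an `(n-1)`-face with asterisk set `S`, every
`n`-face having `g` as an incoming subface is `g` with one digit position `p` turned into an
asterisk, and this is an incoming subface exactly when `g p` is the parity of the number of
elements of `S` below `p`. The order of `g` is therefore the number of digit positions of `g`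
carrying this "expected" digit. It is maximal, `N - n + 1`, iff every digit is the expected
one, and `0` iff every digit is the opposite one; each condition determines `g` uniquely.
-/

namespace CubeFace

variable {N : ℕ}

def stars (g : CubeFace N) : Finset (Fin N) := {i | g i = none}

@[simp]
lemma mem_stars {g : CubeFace N} {i : Fin N} : i ∈ g.stars ↔ g i = none := by
  simp [stars]

lemma isFace_iff {k : ℕ} {g : CubeFace N} : IsFace k g ↔ g.stars.card = k := Iff.rfl

/-- The digit `κ` of position `p` in any face whose set of asterisks is `insert p S`. -/
def parityBelow (S : Finset (Fin N)) (p : Fin N) : Bool :=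
  decide (Odd (S.filter (· < p)).card)

/-- The digit positions `p` at which `g` is an incoming subface of the face obtained by
putting an asterisk at `p`. -/
def agreeSet (g : CubeFace N) : Finset (Fin N) := {p | g p = some (parityBelow g.stars p)}

lemma agreeSet_subset_compl_stars (g : CubeFace N) : g.agreeSet ⊆ g.starsᶜ := by
  intro p hp
  simp_all [agreeSet]

lemma stars_update_none (g : CubeFace N) (p : Fin N) :
    stars (Function.update g p none) = insert p g.stars := by
  ext q
  rcases eq_or_ne q p with rfl | hq
  · simp
  · simp [hq]

lemma kappa_update_none (g : CubeFace N) (p : Fin N) :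
    kappa (Function.update g p none) p = parityBelow g.stars p := by
  rw [kappa, parityBelow]
  congr 3
  ext q
  simp only [Finset.mem_filter, Finset.mem_univ, true_and, mem_stars]
  constructor
  · rintro ⟨hqp, hq⟩
    rw [Function.update_of_ne hqp.ne] at hq
    exact ⟨hq, hqp⟩
  · rintro ⟨hq, hqp⟩
    rw [Function.update_of_ne hqp.ne]
    exact ⟨hqp, hq⟩

lemma incoming_iff {f g : CubeFace N} :
    Incoming f g ↔ ∃ p ∈ g.agreeSet, f = Function.update g p none := by
  constructor
  · rintro ⟨p, hfp, hgp, hfg⟩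
    have hf : f = Function.update g p none := by
      funext q
      rcases eq_or_ne q p with rfl | hq
      · rw [Function.update_self, hfp]
      · rw [Function.update_of_ne hq, hfg q hq]
    refine ⟨p, ?_, hf⟩
    rw [agreeSet, Finset.mem_filter, hgp, hf, kappa_update_none]
    exact ⟨Finset.mem_univ p, rfl⟩
  · rintro ⟨p, hp, rfl⟩
    refine ⟨p, Function.update_self p none g, ?_,
      fun q hq => (Function.update_of_ne hq _ _).symm⟩
    rw [kappa_update_none]
    exact (Finset.mem_filter.1 hp).2

lemma faceOrder_eq_card_agreeSet (g : CubeFace N) :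
    faceOrder (g.stars.card + 1) g = g.agreeSet.card := by
  have hfaces : {f : CubeFace N | IsFace (g.stars.card + 1) f ∧ Incoming f g} =
      (fun p => Function.update g p none) '' g.agreeSet := by
    ext f
    simp only [Set.mem_ofPred_eq, Set.mem_image, Finset.mem_coe, incoming_iff]
    constructor
    · rintro ⟨-, p, hp, rfl⟩
      exact ⟨p, hp, rfl⟩
    · rintro ⟨p, hp, rfl⟩
      have hpS : p ∉ g.stars := Finset.mem_compl.1 (agreeSet_subset_compl_stars g hp)
      exact ⟨by rw [isFace_iff, stars_update_none, Finset.card_insert_of_notMem hpS],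
        p, hp, rfl⟩
  have hinj : Set.InjOn (fun p => Function.update g p none) g.agreeSet := by
    intro p hp p' _ h
    by_contra hne
    have hpS : p ∉ g.stars := Finset.mem_compl.1 (agreeSet_subset_compl_stars g hp)
    have := congrFun h p
    simp only [Function.update_self, Function.update_of_ne hne] at this
    exact hpS (mem_stars.2 this.symm)
  rw [faceOrder, ← Set.ncard_coe_finset g.agreeSet, ← hinj.ncard_image, ← hfaces]
  exact Nat.card_coe_set_eq _

lemma eq_of_stars_eq_of_agreeSet_eq {g g' : CubeFace N} (hs : g.stars = g'.stars)
    (ha : g.agreeSet = g'.agreeSet) : g = g' := by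
  funext i
  have hmem : i ∈ g.agreeSet ↔ i ∈ g'.agreeSet := by rw [ha]
  have hstar : g i = none ↔ g' i = none := by rw [← mem_stars, ← mem_stars, hs]
  simp only [agreeSet, Finset.mem_filter, Finset.mem_univ, true_and, hs] at hmem
  rcases hgi : g i with _ | b <;> rcases hgi' : g' i with _ | b' <;> simp_all
  cases b <;> cases b' <;> cases parityBelow g'.stars i <;> simp_all

def ofStarsAgree (S T : Finset (Fin N)) : CubeFace N :=
  fun i => if i ∈ S then none else some (if i ∈ T then parityBelow S i else !parityBelow S i)

lemma stars_ofStarsAgree (S T : Finset (Fin N)) : (ofStarsAgree S T).stars = S := by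
  ext i
  by_cases hi : i ∈ S <;> simp [ofStarsAgree, hi]

lemma agreeSet_ofStarsAgree {S T : Finset (Fin N)} (hST : Disjoint S T) :
    (ofStarsAgree S T).agreeSet = T := by
  ext i
  rw [agreeSet, stars_ofStarsAgree, Finset.mem_filter]
  by_cases hT : i ∈ T
  · simp [ofStarsAgree, hT, Finset.disjoint_right.1 hST hT]
  · by_cases hS : i ∈ S <;> simp [ofStarsAgree, hT, hS]

lemma existsUnique_stars_agreeSet {S T : Finset (Fin N)} (hST : Disjoint S T) :
    ∃! g : CubeFace N, g.stars = S ∧ g.agreeSet = T :=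
  ⟨ofStarsAgree S T, ⟨stars_ofStarsAgree S T, agreeSet_ofStarsAgree hST⟩,
    fun _ ⟨hs, ha⟩ => eq_of_stars_eq_of_agreeSet_eq
      (hs.trans (stars_ofStarsAgree S T).symm) (ha.trans (agreeSet_ofStarsAgree hST).symm)⟩

lemma existsUnique_of_card_agreeSet_iff {S T : Finset (Fin N)} {k : ℕ} (hST : Disjoint S T)
    (h : ∀ g : CubeFace N, g.stars = S → (g.agreeSet.card = k ↔ g.agreeSet = T)) :
    ∃! g : CubeFace N, g.stars = S ∧ IsFace S.card g ∧ faceOrder (S.card + 1) g = k := by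
  refine (existsUnique_congr fun g => ?_).1 (existsUnique_stars_agreeSet hST)
  constructor
  · rintro ⟨rfl, ha⟩
    exact ⟨rfl, rfl, (faceOrder_eq_card_agreeSet g).trans ((h g rfl).2 ha)⟩
  · rintro ⟨rfl, -, hk⟩
    exact ⟨rfl, (h g rfl).1 ((faceOrder_eq_card_agreeSet g).symm.trans hk)⟩

end CubeFace

open CubeFace

/-- For every set `S` of `n-1` coordinate positions, there is exactly one absolutely
incoming `(n-1)`-face of `I^N` whose asterisk positions are exactly `S`, and exactly one
absolutely outgoing `(n-1)`-face whose asterisk positions are exactly `S`. -/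
theorem stmt1 (n N : ℕ) (h2 : 2 ≤ n) (hN : n ≤ N)
    (S : Finset (Fin N)) (hS : S.card = n - 1) :
    (∃! g : CubeFace N,
      (Finset.filter (fun i => g i = none) Finset.univ) = S ∧
      IsFace (n - 1) g ∧ faceOrder n g = N - n + 1) ∧
    (∃! g : CubeFace N,
      (Finset.filter (fun i => g i = none) Finset.univ) = S ∧
      IsFace (n - 1) g ∧ faceOrder n g = 0) := by
  obtain rfl : n = S.card + 1 := by omega
  rw [Nat.add_sub_cancel]
  constructor
  · have hcompl : N - (S.card + 1) + 1 = Sᶜ.card := by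
      rw [Finset.card_compl, Fintype.card_fin]
      omega
    rw [hcompl]
    refine existsUnique_of_card_agreeSet_iff disjoint_compl_right
      fun g hg => ⟨fun hcard => ?_, fun ha => by rw [ha]⟩
    exact Finset.eq_of_subset_of_card_le (hg ▸ agreeSet_subset_compl_stars g) hcard.ge
  · exact existsUnique_of_card_agreeSet_iff (Finset.disjoint_empty_right S)
      fun g _ => Finset.card_eq_zero
end

section
/- Let n ≥ 2, let X be a finite set, and let R : X^n → X^n satisfy the set-theoretic n-simplex equation, formulated as: every map from the set of absolutely incoming (n−1)-faces of I^{n+1} to X extends to a permitted coloring of I^{n+1}. Then for every N ≥ n, the restriction map sending a permitted coloring of I^N to its restriction to the absolutely incoming (n−1)-faces is a bijection onto the set of all maps from the absolutely incoming (n−1)-faces of I^N to X; in particular, the number of permitted colorings of I^N equals |X|^{binomial(N, n−1)}. -/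
/-- The subtype of `k`-faces of `I^N`. -/
def FaceT (N k : ℕ) := {τ : CubeFace N // IsFace k τ}

/-- The incoming subface of an `n`-face `f` obtained by replacing the asterisk at
position `p` by the digit `κ(f, p)`. -/
def inAt {N : ℕ} (f : CubeFace N) (p : Fin N) : CubeFace N :=
  fun q => if q = p then some (kappa f p) else f q

/-- The outgoing subface of an `n`-face `f` obtained by replacing the asterisk at
position `p` by the digit different from `κ(f, p)`. -/
def outAt {N : ℕ} (f : CubeFace N) (p : Fin N) : CubeFace N :=
  fun q => if q = p then some (!kappa f p) else f q

/-- A coloring `c` of the `(n-1)`-faces of `I^N` is permitted with respect to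
`R : Xⁿ → Xⁿ` if for every `n`-face `f`, with asterisk positions enumerated in
increasing order by `p : Fin n → Fin N`, the colors of the outgoing `(n-1)`-subfaces
(listed in increasing order of the replaced asterisk position) are the image under `R`
of the colors of the incoming `(n-1)`-subfaces (listed likewise). -/
def Permitted {N n : ℕ} {X : Type*} (R : (Fin n → X) → (Fin n → X))
    (c : FaceT N (n - 1) → X) : Prop :=
  ∀ f : CubeFace N, IsFace n f →
    ∀ p : Fin n → Fin N, StrictMono p → (∀ k, f (p k) = none) →
      ∀ gIn gOut : Fin n → FaceT N (n - 1),
        (∀ k, (gIn k).1 = inAt f (p k)) → (∀ k, (gOut k).1 = outAt f (p k)) →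
        (fun k => c (gOut k)) = R (fun k => c (gIn k))

/-- The absolutely incoming `(n-1)`-faces of `I^N`: those of maximal order `N - n + 1`. -/
def AbsIn (N n : ℕ) := {g : FaceT N (n - 1) // faceOrder n g.1 = N - n + 1}

/-- Restriction of a coloring to the absolutely incoming `(n-1)`-faces. -/
def resAbs {N n : ℕ} {X : Type*} (c : FaceT N (n - 1) → X) : AbsIn N n → X :=
  fun g => c g.1

/-!
Call the digit of a face `g` at position `p` *wrong* if it differs from `kappa g p`. The
absolutely incoming `(n-1)`-faces are exactly those without wrong digits, and every face with a
wrong digit is an outgoing subface of some `n`-face. Weighting positions by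
correct digit < asterisk < wrong digit and comparing from the last position down, the incoming
subfaces of an `n`-face lie strictly below its outgoing ones. Hence a permitted coloring is
determined by its values on the absolutely incoming faces, and arbitrary values there extend by
well-founded recursion, as long as the recursion does not depend on the `n`-face chosen for a
face `g`. Two `n`-faces with the common outgoing subface `g` span an `(n+1)`-face; by the simplex
equation the recursive coloring agrees, below `g`, with a permitted coloring of that
`(n+1)`-face, whose relations at both `n`-faces then give the same color to `g`.
-/
open Finset Function

namespace CubeFace

variable {N : ℕ}

lemma kappa_congr {f g : CubeFace N} {i : Fin N} (h : ∀ q < i, f q = none ↔ g q = none) :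
    kappa f i = kappa g i := by
  unfold kappa
  congr 3
  exact filter_congr fun q _ => and_congr_right (h q)

lemma kappa_update_of_le {f : CubeFace N} {p i : Fin N} (h : i ≤ p) (x : Option Bool) :
    kappa (update f p x) i = kappa f i :=
  kappa_congr fun q hq => by rw [update_of_ne (hq.trans_le h).ne]

lemma kappa_update_some_of_lt {f : CubeFace N} {p i : Fin N} (hp : f p = none) (h : p < i)
    (d : Bool) : kappa (update f p (some d)) i = !kappa f i := by
  have herase : ({q | q < i ∧ update f p (some d) q = none} : Finset (Fin N))
      = ({q | q < i ∧ f q = none} : Finset (Fin N)).erase p := by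
    ext q
    by_cases hq : q = p <;> simp [hq, update_of_ne]
  have hmem : p ∈ ({q | q < i ∧ f q = none} : Finset (Fin N)) := by simp [h, hp]
  obtain ⟨m, hm⟩ := Nat.exists_eq_add_one_of_ne_zero (card_ne_zero_of_mem hmem)
  simp only [kappa, herase, card_erase_of_mem hmem, hm, Nat.add_sub_cancel, Nat.odd_add_one,
    decide_not, Bool.not_not]

lemma isFace_update_some {k : ℕ} {f : CubeFace N} {p : Fin N} (hf : IsFace k f) (hp : f p = none)
    (d : Bool) : IsFace (k - 1) (update f p (some d)) := by
  have : ({q | update f p (some d) q = none} : Finset (Fin N))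
      = ({q | f q = none} : Finset _).erase p := by
    ext q
    by_cases hq : q = p <;> simp [hq, update_of_ne]
  rw [IsFace, this, card_erase_of_mem (by simpa using hp), hf]

lemma isFace_update_none {k : ℕ} {f : CubeFace N} {p : Fin N} (hf : IsFace k f)
    (hp : f p ≠ none) : IsFace (k + 1) (update f p none) := by
  have : ({q | update f p none q = none} : Finset (Fin N))
      = insert p ({q | f q = none} : Finset _) := by
    ext q
    by_cases hq : q = p <;> simp [hq, update_of_ne]
  rw [IsFace, this, card_insert_of_notMem (by simpa using hp), hf]

lemma inAt_eq_update (f : CubeFace N) (p : Fin N) : inAt f p = update f p (some (kappa f p)) := by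
  funext q; simp [inAt, update_apply]

lemma outAt_eq_update (f : CubeFace N) (p : Fin N) :
    outAt f p = update f p (some (!kappa f p)) := by
  funext q; simp [outAt, update_apply]

def AllCorrect (g : CubeFace N) : Prop := ∀ i, g i ≠ some (!kappa g i)

def weight (g : CubeFace N) (i : Fin N) : ℕ :=
  if g i = none then 1 else if g i = some (kappa g i) then 0 else 2

def potential (g : CubeFace N) : Colex (Fin N → ℕ) := toColex (weight g)

lemma potential_update_lt {f : CubeFace N} {p r : Fin N} (hp : f p = none) (hr : f r = none) :
    potential (update f r (some (kappa f r))) < potential (update f p (some (!kappa f p))) := by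
  refine ⟨max p r, fun i hi => ?_, ?_⟩
  · have hpi : p < i := (le_max_left p r).trans_lt hi
    have hri : r < i := (le_max_right p r).trans_lt hi
    simp only [potential, Pi.toColex_apply, weight, kappa_update_some_of_lt hp hpi,
      kappa_update_some_of_lt hr hri, update_of_ne hpi.ne', update_of_ne hri.ne']
  · rcases lt_trichotomy p r with h | rfl | h
    · simp [potential, max_eq_right h.le, weight, kappa_update_of_le, update_of_ne h.ne', hr]
    · simp [potential, weight, kappa_update_of_le]
    · simp [potential, max_eq_left h.le, weight, kappa_update_of_le, update_of_ne h.ne', hp]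

lemma faceOrder_eq_card {n : ℕ} (hn : 1 ≤ n) {g : CubeFace N} (hg : IsFace (n - 1) g) :
    faceOrder n g = #{p | g p = some (kappa g p)} := by
  have hface (p : {p // g p = some (kappa g p)}) : IsFace n (update g p.1 none) := by
    simpa [Nat.sub_add_cancel hn] using isFace_update_none hg (by simp [p.2])
  let toIncoming (p : {p // g p = some (kappa g p)}) :
      {f : CubeFace N // IsFace n f ∧ Incoming f g} :=
    ⟨update g p.1 none, hface p, p.1, update_self _ _ _,
      by rw [kappa_update_of_le le_rfl, p.2], fun q hq => (update_of_ne hq _ _).symm⟩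
  have hbij : Bijective toIncoming := by
    refine ⟨fun p p' h => Subtype.ext ?_, fun ⟨f, _, p, hfp, hgp, hrest⟩ => ?_⟩
    · by_contra hne
      have := congrFun (congrArg Subtype.val h) p.1
      simp [toIncoming, update_of_ne hne, p.2] at this
    · have hκ : kappa f p = kappa g p := kappa_congr fun q hq => by rw [hrest q hq.ne]
      refine ⟨⟨p, hκ ▸ hgp⟩, Subtype.ext (funext fun q => ?_)⟩
      by_cases hq : q = p
      · subst hq; simp [toIncoming, hfp]
      · simp [toIncoming, update_of_ne hq, hrest q hq]
  rw [faceOrder, ← Nat.card_eq_of_bijective _ hbij, Nat.card_eq_fintype_card,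
    Fintype.card_subtype]

lemma card_none_add_card_correct_add_card_wrong (g : CubeFace N) :
    #{p | g p = none} + #{p | g p = some (kappa g p)} + #{p | g p = some (!kappa g p)} = N := by
  simp only [card_filter, ← sum_add_distrib]
  conv_rhs => rw [← card_fin N, card_eq_sum_ones]
  refine sum_congr rfl fun p _ => ?_
  rcases g p with _ | b <;> [simp; cases b <;> cases kappa g p <;> simp]

lemma faceOrder_eq_iff_allCorrect {n : ℕ} (hn : 1 ≤ n) (hN : n ≤ N) {g : CubeFace N}
    (hg : IsFace (n - 1) g) : faceOrder n g = N - n + 1 ↔ AllCorrect g := by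
  have hwrong : AllCorrect g ↔ #{p | g p = some (!kappa g p)} = 0 := by
    simp [AllCorrect, filter_eq_empty_iff]
  have hstars : #{p | g p = none} = n - 1 := hg
  have := card_none_add_card_correct_add_card_wrong g
  rw [faceOrder_eq_card hn hg, hwrong]
  omega

def correctFace (s : Finset (Fin N)) : CubeFace N :=
  fun i => if i ∈ s then none else some (decide (Odd #{q ∈ s | q < i}))

lemma filter_correctFace_eq_none (s : Finset (Fin N)) :
    ({q | correctFace s q = none} : Finset _) = s := by
  ext q; by_cases hq : q ∈ s <;> simp [correctFace, hq]

lemma kappa_correctFace (s : Finset (Fin N)) (i : Fin N) :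
    kappa (correctFace s) i = decide (Odd #{q ∈ s | q < i}) := by
  have : ({q | q < i ∧ correctFace s q = none} : Finset (Fin N)) = {q ∈ s | q < i} := by
    ext q; by_cases hq : q ∈ s <;> simp [correctFace, hq, and_comm]
  rw [kappa, this]

lemma allCorrect_correctFace (s : Finset (Fin N)) : AllCorrect (correctFace s) := by
  intro i
  by_cases hi : i ∈ s <;> simp [correctFace, hi, kappa_correctFace]

lemma correctFace_filter_eq_none {g : CubeFace N} (hg : AllCorrect g) :
    correctFace {q | g q = none} = g := by
  funext i
  rcases hgi : g i with _ | b
  · simp [correctFace, hgi]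
  · have hb : b = kappa g i := by simpa [hgi] using hg i
    have : {q ∈ ({q | g q = none} : Finset (Fin N)) | q < i}
        = ({q | q < i ∧ g q = none} : Finset (Fin N)) := by
      ext q; simp [and_comm]
    simp [correctFace, hgi, hb, kappa, this]

end CubeFace

abbrev CorrectFace (N k : ℕ) := {g : FaceT N k // CubeFace.AllCorrect g.1}

def restrictToCorrect {n : ℕ} {X : Type*} (N : ℕ) (R : (Fin n → X) → (Fin n → X)) :
    {c : FaceT N (n - 1) → X // Permitted R c} → CorrectFace N (n - 1) → X :=
  fun c g => c.1 g.1

open CubeFace in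
def correctFaceEquivFinset (N k : ℕ) :
    CorrectFace N k ≃ {s : Finset (Fin N) // s.card = k} where
  toFun g := ⟨({q | g.1.1 q = none} : Finset (Fin N)), g.1.2⟩
  invFun s := ⟨⟨correctFace s.1, by rw [IsFace, filter_correctFace_eq_none, s.2]⟩,
    allCorrect_correctFace s.1⟩
  left_inv g := Subtype.ext (Subtype.ext (correctFace_filter_eq_none g.2))
  right_inv s := Subtype.ext (filter_correctFace_eq_none s.1)

def absInEquiv {N n : ℕ} (hn : 1 ≤ n) (hN : n ≤ N) : AbsIn N n ≃ CorrectFace N (n - 1) :=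
  Equiv.subtypeEquivRight fun g => CubeFace.faceOrder_eq_iff_allCorrect hn hN g.2

namespace FaceT

open CubeFace

variable {N K k m n : ℕ} {X : Type*} {R : (Fin n → X) → (Fin n → X)}

noncomputable def stars (f : FaceT N k) : Fin k ↪o Fin N :=
  orderEmbOfFin ({q | f.1 q = none} : Finset (Fin N)) f.2

lemma apply_stars (f : FaceT N k) (j : Fin k) : f.1 (f.stars j) = none :=
  (mem_filter.1 (orderEmbOfFin_mem _ f.2 j)).2

lemma exists_stars_eq (f : FaceT N k) {q : Fin N} (hq : f.1 q = none) : ∃ j, f.stars j = q := by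
  have hq' : q ∈ (({q | f.1 q = none} : Finset (Fin N)) : Set (Fin N)) := by simpa using hq
  rw [← range_orderEmbOfFin _ f.2] at hq'
  exact hq'

lemma stars_eq_of_strictMono (f : FaceT N k) {p : Fin k → Fin N} (hp : StrictMono p)
    (hnone : ∀ j, f.1 (p j) = none) : p = f.stars :=
  orderEmbOfFin_unique f.2 (fun j => by simpa using hnone j) hp

noncomputable def inFace (f : FaceT N n) (j : Fin n) : FaceT N (n - 1) :=
  ⟨inAt f.1 (f.stars j), by
    rw [inAt_eq_update]; exact isFace_update_some f.2 (f.apply_stars j) _⟩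

noncomputable def outFace (f : FaceT N n) (j : Fin n) : FaceT N (n - 1) :=
  ⟨outAt f.1 (f.stars j), by
    rw [outAt_eq_update]; exact isFace_update_some f.2 (f.apply_stars j) _⟩

lemma permitted_iff {c : FaceT N (n - 1) → X} :
    Permitted R c ↔ ∀ (f : FaceT N n) k, c (f.outFace k) = R (fun j => c (f.inFace j)) k := by
  refine ⟨fun h f k => congrFun (h f.1 f.2 f.stars f.stars.strictMono f.apply_stars
    f.inFace f.outFace (fun _ => rfl) (fun _ => rfl)) k,
    fun h f hf p hp hnone gIn gOut hIn hOut => ?_⟩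
  obtain rfl := stars_eq_of_strictMono ⟨f, hf⟩ hp hnone
  obtain rfl : gIn = inFace ⟨f, hf⟩ := funext fun j => Subtype.ext (hIn j)
  obtain rfl : gOut = outFace ⟨f, hf⟩ := funext fun j => Subtype.ext (hOut j)
  exact funext (h ⟨f, hf⟩)

lemma potential_inFace_lt_outFace (f : FaceT N n) (j k : Fin n) :
    potential (f.inFace j).1 < potential (f.outFace k).1 := by
  simp only [inFace, outFace, inAt_eq_update, outAt_eq_update]
  exact potential_update_lt (f.apply_stars k) (f.apply_stars j)

lemma update_outFace (f : FaceT N n) (k : Fin n) :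
    update (f.outFace k).1 (f.stars k) none = f.1 := by
  simp only [outFace, outAt_eq_update, update_idem]
  exact update_eq_self_iff.2 (f.apply_stars k).symm

lemma outFace_apply_of_ne (f : FaceT N n) {k : Fin n} {q : Fin N} (hq : q ≠ f.stars k) :
    (f.outFace k).1 q = f.1 q := by
  simp [outFace, outAt, hq]

lemma not_allCorrect_outFace (f : FaceT N n) (k : Fin n) : ¬ AllCorrect (f.outFace k).1 := by
  intro h
  apply h (f.stars k)
  simp [outFace, outAt_eq_update, kappa_update_of_le]

lemma eq_of_outFace_eq {f f' : FaceT N n} {k k' : Fin n} (h : f.outFace k = f'.outFace k')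
    (hs : f.stars k = f'.stars k') : f = f' :=
  Subtype.ext (by rw [← f.update_outFace k, ← f'.update_outFace k', h, hs])

lemma exists_outFace_eq (hn : 1 ≤ n) (g : FaceT N (n - 1)) (hg : ¬ AllCorrect g.1) :
    ∃ fk : FaceT N n × Fin n, fk.1.outFace fk.2 = g := by
  obtain ⟨p, hp⟩ : ∃ p, g.1 p = some (!kappa g.1 p) := by simpa [AllCorrect] using hg
  have hf : IsFace n (update g.1 p none) := by
    simpa [Nat.sub_add_cancel hn] using isFace_update_none g.2 (by simp [hp])
  obtain ⟨k, hk⟩ := exists_stars_eq ⟨_, hf⟩ (update_self p none g.1)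
  refine ⟨(⟨_, hf⟩, k), Subtype.ext ?_⟩
  simp only [outFace, outAt_eq_update, hk, kappa_update_of_le le_rfl, update_idem, ← hp]
  exact update_eq_self p g.1

lemma wellFounded_potential :
    WellFounded (fun g g' : FaceT N k => potential g.1 < potential g'.1) :=
  InvImage.wf (fun g : FaceT N k => potential g.1) wellFounded_lt

lemma eqOn_of_recursion (hn : 1 ≤ n) {S : Set (FaceT N (n - 1))}
    {c c' : FaceT N (n - 1) → X}
    (hS : ∀ (f : FaceT N n) k j, f.outFace k ∈ S → f.inFace j ∈ S)
    (hc : ∀ (f : FaceT N n) k, f.outFace k ∈ S →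
      c (f.outFace k) = R (fun j => c (f.inFace j)) k)
    (hc' : ∀ (f : FaceT N n) k, f.outFace k ∈ S →
      c' (f.outFace k) = R (fun j => c' (f.inFace j)) k)
    (hcorrect : ∀ g ∈ S, AllCorrect g.1 → c g = c' g) : Set.EqOn c c' S := by
  intro g
  induction g using wellFounded_potential.induction with
  | _ g ih =>
  intro hgS
  by_cases hg : AllCorrect g.1
  · exact hcorrect g hgS hg
  obtain ⟨⟨f, k⟩, rfl⟩ := exists_outFace_eq hn g hg
  rw [hc f k hgS, hc' f k hgS]
  congr 1
  funext j
  exact ih _ (potential_inFace_lt_outFace f j k) (hS f k j hgS)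

lemma eq_of_permitted (hn : 1 ≤ n) {c c' : FaceT N (n - 1) → X}
    (hc : Permitted R c) (hc' : Permitted R c') (hcorrect : ∀ g, AllCorrect g.1 → c g = c' g) :
    c = c' :=
  funext fun g => eqOn_of_recursion hn (S := Set.univ) (fun _ _ _ _ => trivial)
    (fun f k _ => permitted_iff.1 hc f k) (fun f k _ => permitted_iff.1 hc' f k)
    (fun g _ => hcorrect g) (Set.mem_univ g)

-- `I^K` as the face `F` of `I^N`: the asterisk positions of `F`, in increasing order, are filled
-- in by `σ`.
noncomputable def embedFace (F : FaceT N K) (σ : CubeFace K) : CubeFace N := extend F.stars σ F.1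

lemma embedFace_stars (F : FaceT N K) (σ : CubeFace K) (j : Fin K) :
    embedFace F σ (F.stars j) = σ j :=
  F.stars.injective.extend_apply σ F.1 j

lemma embedFace_of_ne_none (F : FaceT N K) (σ : CubeFace K) {q : Fin N} (hq : F.1 q ≠ none) :
    embedFace F σ q = F.1 q :=
  extend_apply' _ _ _ (by rintro ⟨j, rfl⟩; exact hq (F.apply_stars j))

lemma eq_embedFace_iff {F : FaceT N K} {σ : CubeFace K} {h : CubeFace N} :
    h = embedFace F σ ↔
      (∀ j, h (F.stars j) = σ j) ∧ ∀ q, F.1 q ≠ none → h q = F.1 q := by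
  refine ⟨by rintro rfl; exact ⟨embedFace_stars F σ, fun q => embedFace_of_ne_none F σ⟩,
    fun ⟨hstars, hdigits⟩ => funext fun q => ?_⟩
  by_cases hq : F.1 q = none
  · obtain ⟨j, rfl⟩ := F.exists_stars_eq hq
    rw [hstars, embedFace_stars]
  · rw [hdigits q hq, embedFace_of_ne_none F σ hq]

lemma embedFace_update (F : FaceT N K) (σ : CubeFace K) (j : Fin K) (x : Option Bool) :
    embedFace F (update σ j x) = update (embedFace F σ) (F.stars j) x := by
  refine (eq_embedFace_iff.2 ⟨fun j' => ?_, fun q hq => ?_⟩).symm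
  · rw [← comp_apply (f := update _ _ _), update_comp_eq_of_injective _ F.stars.injective]
    congr 1
    exact funext (embedFace_stars F σ)
  · have hqj : q ≠ F.stars j := by rintro rfl; exact hq (F.apply_stars j)
    rw [update_of_ne hqj, embedFace_of_ne_none F σ hq]

lemma filter_embedFace_eq_none (F : FaceT N K) (σ : CubeFace K) (P : Fin N → Prop)
    [DecidablePred P] :
    ({q | P q ∧ embedFace F σ q = none} : Finset (Fin N))
      = ({j | P (F.stars j) ∧ σ j = none} : Finset (Fin K)).map F.stars.toEmbedding := by
  ext q
  simp only [mem_map, mem_filter, mem_univ, true_and, RelEmbedding.coe_toEmbedding]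
  constructor
  · rintro ⟨hP, hq⟩
    by_cases hF : F.1 q = none
    · obtain ⟨j, rfl⟩ := F.exists_stars_eq hF
      exact ⟨j, ⟨hP, by rwa [embedFace_stars] at hq⟩, rfl⟩
    · exact absurd ((embedFace_of_ne_none F σ hF).symm.trans hq) hF
  · rintro ⟨j, ⟨hP, hσ⟩, rfl⟩
    exact ⟨hP, by rwa [embedFace_stars]⟩

lemma isFace_embedFace_iff {F : FaceT N K} {σ : CubeFace K} :
    IsFace m (embedFace F σ) ↔ IsFace m σ := by
  have h := filter_embedFace_eq_none F σ (fun _ => True)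
  simp only [true_and] at h
  rw [IsFace, IsFace, h, card_map]

lemma kappa_embedFace_stars (F : FaceT N K) (σ : CubeFace K) (j : Fin K) :
    kappa (embedFace F σ) (F.stars j) = kappa σ j := by
  simp only [kappa, filter_embedFace_eq_none F σ (· < F.stars j), card_map,
    OrderEmbedding.lt_iff_lt]

noncomputable def embed (F : FaceT N K) (σ : FaceT K m) : FaceT N m :=
  ⟨embedFace F σ.1, isFace_embedFace_iff.2 σ.2⟩

lemma embed_injective (F : FaceT N K) : Injective (F.embed (m := m)) := by
  intro σ τ h
  refine Subtype.ext (funext fun j => ?_)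
  simpa only [embed, embedFace_stars] using congrArg (fun g : FaceT N m => g.1 (F.stars j)) h

lemma stars_embed (F : FaceT N K) (σ : FaceT K m) (j : Fin m) :
    (F.embed σ).stars j = F.stars (σ.stars j) :=
  congrFun (stars_eq_of_strictMono _ (F.stars.strictMono.comp σ.stars.strictMono)
    fun j => by simp only [embed, comp_apply, embedFace_stars, apply_stars]).symm j

lemma embed_inFace (F : FaceT N K) (σ : FaceT K n) (j : Fin n) :
    F.embed (σ.inFace j) = (F.embed σ).inFace j := by
  apply Subtype.ext
  simp only [inFace, stars_embed]
  simp only [embed, inAt_eq_update, embedFace_update, kappa_embedFace_stars]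

lemma embed_outFace (F : FaceT N K) (σ : FaceT K n) (j : Fin n) :
    F.embed (σ.outFace j) = (F.embed σ).outFace j := by
  apply Subtype.ext
  simp only [outFace, stars_embed]
  simp only [embed, outAt_eq_update, embedFace_update, kappa_embedFace_stars]

lemma exists_embed_eq (F : FaceT N K) (h : FaceT N m)
    (hF : ∀ q, F.1 q ≠ none → h.1 q = F.1 q) : ∃ σ : FaceT K m, F.embed σ = h := by
  have he : h.1 = embedFace F (h.1 ∘ F.stars) := eq_embedFace_iff.2 ⟨fun _ => rfl, hF⟩
  exact ⟨⟨h.1 ∘ F.stars, isFace_embedFace_iff.1 (he ▸ h.2)⟩, Subtype.ext he.symm⟩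

lemma exists_subcube {f f' : FaceT N n} {k k' : Fin n} (h : f.outFace k = f'.outFace k')
    (hs : f.stars k ≠ f'.stars k') :
    ∃ F : FaceT N (n + 1), (∃ σ, F.embed σ = f) ∧ ∃ σ', F.embed σ' = f' := by
  have hdigit : f.1 (f'.stars k') ≠ none := by
    rw [← f.outFace_apply_of_ne hs.symm, h]
    simp [outFace, outAt]
  have hne : ∀ q, update f.1 (f'.stars k') none q ≠ none → q ≠ f'.stars k' := by
    rintro q hq rfl
    exact hq (update_self _ _ _)
  refine ⟨⟨_, isFace_update_none f.2 hdigit⟩, exists_embed_eq _ f fun q hq => ?_,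
    exists_embed_eq _ f' fun q hq => ?_⟩
  · exact (update_of_ne (hne q hq) _ _).symm
  · have hq' := hne q hq
    simp only [update_of_ne hq'] at hq ⊢
    have hqk : q ≠ f.stars k := by rintro rfl; exact hq (f.apply_stars k)
    rw [← f'.outFace_apply_of_ne hq', ← h, f.outFace_apply_of_ne hqk]

lemma eqOn_comp_embed (hn : 1 ≤ n) {c : FaceT N (n - 1) → X} {b : Colex (Fin N → ℕ)}
    (hc : ∀ (f : FaceT N n) k, potential (f.outFace k).1 < b →
      c (f.outFace k) = R (fun j => c (f.inFace j)) k)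
    (F : FaceT N (n + 1)) {cs : FaceT (n + 1) (n - 1) → X} (hcs : Permitted R cs)
    (hcorrect : ∀ σ, AllCorrect σ.1 → c (F.embed σ) = cs σ) :
    Set.EqOn (fun σ => c (F.embed σ)) cs {σ | potential (F.embed σ).1 < b} := by
  refine eqOn_of_recursion hn (fun σ k j (hσ : potential (F.embed (σ.outFace k)).1 < b) => ?_)
    (fun σ k (hσ : potential (F.embed (σ.outFace k)).1 < b) => ?_)
    (fun σ k _ => permitted_iff.1 hcs σ k) (fun σ _ => hcorrect σ)
  · show potential (F.embed (σ.inFace j)).1 < b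
    rw [embed_inFace]
    rw [embed_outFace] at hσ
    exact (potential_inFace_lt_outFace _ j k).trans hσ
  · rw [embed_outFace] at hσ
    simp only [embed_outFace, embed_inFace]
    exact hc _ k hσ

lemma relation_embed_eq_of_permitted (hn : 1 ≤ n) {c : FaceT N (n - 1) → X}
    {g : FaceT N (n - 1)}
    (hc : ∀ (f : FaceT N n) k, potential (f.outFace k).1 < potential g.1 →
      c (f.outFace k) = R (fun j => c (f.inFace j)) k)
    (F : FaceT N (n + 1)) {cs : FaceT (n + 1) (n - 1) → X} (hcs : Permitted R cs)
    (hcorrect : ∀ σ, AllCorrect σ.1 → c (F.embed σ) = cs σ)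
    (τ : FaceT (n + 1) n) (l : Fin n) (hτ : F.embed (τ.outFace l) = g) :
    R (fun j => c ((F.embed τ).inFace j)) l = cs (τ.outFace l) := by
  rw [permitted_iff.1 hcs τ l]
  congr 1
  funext j
  rw [← embed_inFace]
  refine eqOn_comp_embed hn hc F hcs hcorrect ?_
  show potential (F.embed (τ.inFace j)).1 < potential g.1
  rw [embed_inFace, ← hτ, embed_outFace]
  exact potential_inFace_lt_outFace _ j l

open Classical in
noncomputable def greedy (R : (Fin n → X) → (Fin n → X)) (hn : 1 ≤ n)
    (c0 : CorrectFace N (n - 1) → X) : FaceT N (n - 1) → X :=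
  wellFounded_potential.fix fun g rec =>
    if hg : AllCorrect g.1 then c0 ⟨g, hg⟩
    else
      have hfk := exists_outFace_eq hn g hg
      R (fun j => rec (hfk.choose.1.inFace j)
        ((potential_inFace_lt_outFace _ j _).trans_eq
          (congrArg (fun g => potential g.1) hfk.choose_spec))) hfk.choose.2

section

variable (R) (hn : 1 ≤ n) (c0 : CorrectFace N (n - 1) → X)

lemma greedy_of_allCorrect (g : FaceT N (n - 1)) (hg : AllCorrect g.1) :
    greedy R hn c0 g = c0 ⟨g, hg⟩ := by
  rw [greedy, WellFounded.fix_eq, dif_pos hg]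

lemma exists_greedy_eq (g : FaceT N (n - 1)) (hg : ¬ AllCorrect g.1) :
    ∃ fk : FaceT N n × Fin n, fk.1.outFace fk.2 = g ∧
      greedy R hn c0 g = R (fun j => greedy R hn c0 (fk.1.inFace j)) fk.2 :=
  ⟨_, (exists_outFace_eq hn g hg).choose_spec, by rw [greedy, WellFounded.fix_eq, dif_neg hg]⟩

end

lemma greedy_outFace (hn : 1 ≤ n) (hR : Surjective (restrictToCorrect (n + 1) R))
    (c0 : CorrectFace N (n - 1) → X) (f : FaceT N n) (k : Fin n) :
    greedy R hn c0 (f.outFace k) = R (fun j => greedy R hn c0 (f.inFace j)) k := by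
  suffices H : ∀ g (f : FaceT N n) k, f.outFace k = g →
      greedy R hn c0 g = R (fun j => greedy R hn c0 (f.inFace j)) k from H _ f k rfl
  intro g
  induction g using wellFounded_potential.induction with
  | _ g ih =>
  intro f k hfk
  obtain ⟨⟨f', k'⟩, hfk', hG⟩ :=
    exists_greedy_eq R hn c0 g (hfk ▸ not_allCorrect_outFace f k)
  rw [hG]
  by_cases hs : f'.stars k' = f.stars k
  · obtain rfl := eq_of_outFace_eq (hfk'.trans hfk.symm) hs
    obtain rfl := f'.stars.injective hs
    rfl
  obtain ⟨F, ⟨σ', rfl⟩, σ, rfl⟩ := exists_subcube (hfk'.trans hfk.symm) hs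
  obtain ⟨⟨cs, hcs⟩, hcs0⟩ := hR fun σ => greedy R hn c0 (F.embed σ.1)
  have hrel := relation_embed_eq_of_permitted hn (fun f k hlt => ih (f.outFace k) hlt f k rfl)
    F hcs (fun σ hσ => (congrFun hcs0 ⟨σ, hσ⟩).symm)
  have hout' : F.embed (σ'.outFace k') = g := by rw [embed_outFace, hfk']
  have hout : F.embed (σ.outFace k) = g := by rw [embed_outFace, hfk]
  rw [hrel σ' k' hout', hrel σ k hout, F.embed_injective (hout'.trans hout.symm)]

lemma greedy_permitted (hn : 1 ≤ n) (hR : Surjective (restrictToCorrect (n + 1) R))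
    (c0 : CorrectFace N (n - 1) → X) : Permitted R (greedy R hn c0) :=
  permitted_iff.2 (greedy_outFace hn hR c0)

end FaceT

open FaceT in
theorem bijective_restrictToCorrect {n : ℕ} {X : Type*} (hn : 1 ≤ n)
    {R : (Fin n → X) → (Fin n → X)} (hR : Surjective (restrictToCorrect (n + 1) R))
    (N : ℕ) :
    Bijective (restrictToCorrect N R) :=
  ⟨fun c c' h => Subtype.ext (eq_of_permitted hn c.2 c'.2 fun g hg => congrFun h ⟨g, hg⟩),
    fun c0 => ⟨⟨greedy R hn c0, greedy_permitted hn hR c0⟩,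
      funext fun g => greedy_of_allCorrect R hn c0 g.1 g.2⟩⟩

lemma resAbs_eq_comp {N n : ℕ} {X : Type*} (hn : 1 ≤ n) (hN : n ≤ N)
    (R : (Fin n → X) → (Fin n → X)) :
    (fun c : {c : FaceT N (n - 1) → X // Permitted R c} => resAbs c.1)
      = (absInEquiv hn hN).symm.arrowCongr (Equiv.refl X) ∘ restrictToCorrect N R :=
  rfl

/-- If `X` is finite and `R` satisfies the set-theoretic `n`-simplex equation
(formulated as: every coloring of the absolutely incoming `(n-1)`-faces of `I^{n+1}`
extends to a permitted coloring of `I^{n+1}`), then for every `N ≥ n` the restriction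
map from permitted colorings of `I^N` to colorings of the absolutely incoming
`(n-1)`-faces is a bijection; in particular the number of permitted colorings of `I^N`
is `|X| ^ (N.choose (n-1))`. -/
theorem stmt9 (n : ℕ) (hn : 2 ≤ n) (X : Type*) [Fintype X]
    (R : (Fin n → X) → (Fin n → X))
    (hR : ∀ c0 : AbsIn (n + 1) n → X,
      ∃ c : FaceT (n + 1) (n - 1) → X, Permitted R c ∧ resAbs c = c0) :
    ∀ N : ℕ, n ≤ N →
      Function.Bijective
        (fun c : {c : FaceT N (n - 1) → X // Permitted R c} => resAbs c.1) ∧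
      Nat.card {c : FaceT N (n - 1) → X // Permitted R c}
        = Fintype.card X ^ N.choose (n - 1) := by
  intro N hN
  have hn1 : 1 ≤ n := by omega
  have hsurj : Surjective (restrictToCorrect (n + 1) R) := by
    rw [← Equiv.comp_surjective _ ((absInEquiv hn1 n.le_succ).symm.arrowCongr (Equiv.refl X)),
      ← resAbs_eq_comp]
    exact fun c0 => (hR c0).elim fun c hc => ⟨⟨c, hc.1⟩, hc.2⟩
  have hbij : Bijective fun c : {c : FaceT N (n - 1) → X // Permitted R c} => resAbs c.1 := by
    rw [resAbs_eq_comp hn1 hN, Equiv.comp_bijective]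
    exact bijective_restrictToCorrect hn1 hsurj N
  refine ⟨hbij, ?_⟩
  rw [Nat.card_eq_of_bijective _ hbij,
    Nat.card_congr (((absInEquiv hn1 hN).trans (correctFaceEquivFinset N (n - 1))).arrowCongr
      (Equiv.refl X)),
    Nat.card_fun, Nat.card_eq_fintype_card, Nat.card_eq_fintype_card, Fintype.card_finset_len,
    Fintype.card_fin]
end
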